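/- Let f be a continuous self-map of the Cantor space such that for every m ∈ ℕ there is a partition of mesh < 1/m all of whose components in Γ(f,·) are balloons. Then f is chain continuous at every point: for every x and every ε > 0 there exists δ > 0 such that whenever x_0 ∈ B(x;δ), x_1 ∈ B(f(x_0);δ), x_2 ∈ B(f(x_1);δ), …, we have d(x_n, fⁿ(x)) < ε for all n ≥ 0. -/

import Mathlib

noncomputable def cantorDist (σ τ : ℕ → Bool) : ℝ :=
  letI := Classical.propDecidable (∃ n, σ n ≠ τ n)
  if h : ∃ n, σ n ≠ τ n then 1 / (Nat.find h + 1) else 0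

def IsPartition (P : Finset (Set (ℕ → Bool))) : Prop :=
  (∀ a ∈ P, IsClopen a ∧ a.Nonempty) ∧
  (∀ a ∈ P, ∀ b ∈ P, a ≠ b → Disjoint a b) ∧
  ⋃₀ (P : Set (Set (ℕ → Bool))) = Set.univ

noncomputable def cantorDiam (A : Set (ℕ → Bool)) : ℝ :=
  sSup {r | ∃ σ ∈ A, ∃ τ ∈ A, r = cantorDist σ τ}

noncomputable def mesh (C : Set (Set (ℕ → Bool))) : ℝ :=
  sSup (cantorDiam '' C)

def gammaEdge (f : (ℕ → Bool) → (ℕ → Bool)) (a b : Set (ℕ → Bool)) : Prop :=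
  (f '' a ∩ b).Nonempty

def balloonEdge (s m : ℕ) (a b : Fin (s + m)) : Prop :=
  b.val = a.val + 1 ∨ (a.val = s + m - 1 ∧ b.val = s)

def dumbbellEdge (r s t : ℕ) (a b : Fin (r + s + t)) : Prop :=
  (b.val = a.val + 1 ∧ a.val + 1 ≠ r) ∨
  (a.val = r - 1 ∧ b.val = 0) ∨
  (a.val = 0 ∧ b.val = r) ∨
  (a.val = r + s + t - 1 ∧ b.val = r + s)

/-- Every component of `Γ(f,P)` is a balloon. -/
def AllComponentsBalloons (f : (ℕ → Bool) → (ℕ → Bool))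
    (P : Finset (Set (ℕ → Bool))) : Prop :=
  ∃ (k : ℕ) (s t : Fin k → ℕ), (∀ i, 0 < s i) ∧ (∀ i, 0 < t i) ∧
    ∃ e : {a // a ∈ P} ≃ (Σ i : Fin k, Fin (s i + t i)),
      ∀ a b : {a // a ∈ P}, gammaEdge f a.val b.val ↔
        ∃ heq : (e a).1 = (e b).1,
          balloonEdge (s (e b).1) (t (e b).1)
            (Fin.cast (by rw [heq]) (e a).2) (e b).2

/-!
If every component of `Γ(f, P)` is a balloon, each vertex has a single out-edge, so `f` maps
each piece of `P` into a single piece. Pieces are clopen, hence unions of cylinders of one common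
length `N`, so a point within `1/(N+1)` of a piece lies in it. By induction a `1/(N+1)`-pseudo-orbit
starting near `x` then visits, at time `n`, the piece containing `fⁿ(x)`, and so stays within the
mesh of `P` from the true orbit; the mesh can be taken below any `ε`.
-/

open PiNat

theorem IsCompact.exists_cylinder_subset_of_isOpen {E : ℕ → Type*}
    [∀ n, TopologicalSpace (E n)] [∀ n, DiscreteTopology (E n)] {a : Set (∀ n, E n)}
    (hc : IsCompact a) (ho : IsOpen a) : ∃ N, ∀ σ ∈ a, cylinder σ N ⊆ a := by
  have local_cylinder : ∀ σ ∈ a, ∃ n, cylinder σ n ⊆ a := by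
    intro σ hσ
    obtain ⟨v, ⟨x, n, rfl⟩, hxv, hva⟩ :=
      (isTopologicalBasis_cylinders E).exists_subset_of_mem_open hσ ho
    exact ⟨n, fun τ hτ => hva fun i hi => (hτ i hi).trans (hxv i hi)⟩
  choose! n hn using local_cylinder
  obtain ⟨t, ht⟩ := hc.elim_finite_subcover (fun σ : a => cylinder σ.1 (n σ.1))
    (fun σ => isOpen_cylinder _ _ _) (fun σ hσ => Set.mem_iUnion.2 ⟨⟨σ, hσ⟩, self_mem_cylinder _ _⟩)
  refine ⟨t.sup fun σ => n σ.1, fun σ hσ τ hτ => ?_⟩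
  obtain ⟨ρ, hρt, hσρ⟩ := Set.mem_iUnion₂.1 (ht hσ)
  have hle : n ρ.1 ≤ t.sup fun σ => n σ.1 := Finset.le_sup (f := fun σ : a => n σ.1) hρt
  exact hn ρ.1 ρ.2 fun i hi => (hτ i (hi.trans_le hle)).trans (hσρ i hi)

theorem cantorDist_le_one (σ τ : ℕ → Bool) : cantorDist σ τ ≤ 1 := by
  unfold cantorDist
  split_ifs
  · exact div_le_one_of_le₀ (by simp) (by positivity)
  · exact zero_le_one

theorem mem_cylinder_of_cantorDist_lt {σ τ : ℕ → Bool} {N : ℕ}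
    (h : cantorDist σ τ < 1 / (N + 1)) : σ ∈ cylinder τ N := by
  intro i hi
  unfold cantorDist at h
  split_ifs at h with hne
  · have hN : N < Nat.find hne := by
      have := (one_div_lt_one_div (by positivity) (by positivity)).1 h
      exact_mod_cast (add_lt_add_iff_right 1).1 this
    exact not_not.1 (Nat.find_min hne (hi.trans hN))
  · exact not_not.1 (not_exists.1 hne i)

theorem cantorDist_le_cantorDiam {A : Set (ℕ → Bool)} {σ τ : ℕ → Bool}
    (hσ : σ ∈ A) (hτ : τ ∈ A) : cantorDist σ τ ≤ cantorDiam A := by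
  refine le_csSup ⟨1, ?_⟩ ⟨σ, hσ, τ, hτ, rfl⟩
  rintro r ⟨σ', -, τ', -, rfl⟩
  exact cantorDist_le_one σ' τ'

theorem cantorDiam_le_mesh {P : Finset (Set (ℕ → Bool))} {A : Set (ℕ → Bool)} (hA : A ∈ P) :
    cantorDiam A ≤ mesh (↑P : Set (Set (ℕ → Bool))) :=
  le_csSup (P.finite_toSet.image _).bddAbove ⟨A, hA, rfl⟩

section Partition

variable {P : Finset (Set (ℕ → Bool))}

theorem IsPartition.exists_mem (hP : IsPartition P) (σ : ℕ → Bool) : ∃ a ∈ P, σ ∈ a :=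
  Set.sUnion_eq_univ_iff.1 hP.2.2 σ

theorem IsPartition.exists_pos_mem_of_cantorDist_lt (hP : IsPartition P) :
    ∃ δ > 0, ∀ a ∈ P, ∀ σ ∈ a, ∀ τ, cantorDist τ σ < δ → τ ∈ a := by
  have uniform_cylinder : ∀ a ∈ P, ∃ N, ∀ σ ∈ a, cylinder σ N ⊆ a := fun a ha =>
    (hP.1 a ha).1.isClosed.isCompact.exists_cylinder_subset_of_isOpen (hP.1 a ha).1.isOpen
  choose! N hN using uniform_cylinder
  refine ⟨1 / (P.sup N + 1), by positivity, fun a ha σ hσ τ hτσ => hN a ha σ hσ ?_⟩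
  exact cylinder_anti σ (Finset.le_sup ha) (mem_cylinder_of_cantorDist_lt hτσ)

theorem IsPartition.exists_mem_iterate_of_pseudoOrbit (hP : IsPartition P)
    {f : (ℕ → Bool) → (ℕ → Bool)} (hf : ∀ a ∈ P, ∃ b ∈ P, f '' a ⊆ b) {δ : ℝ}
    (hδ : ∀ a ∈ P, ∀ σ ∈ a, ∀ τ, cantorDist τ σ < δ → τ ∈ a) {x : ℕ → Bool}
    {xs : ℕ → (ℕ → Bool)} (h₀ : cantorDist (xs 0) x < δ)
    (hxs : ∀ n, cantorDist (xs (n + 1)) (f (xs n)) < δ) (n : ℕ) :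
    ∃ a ∈ P, xs n ∈ a ∧ f^[n] x ∈ a := by
  induction n with
  | zero =>
    obtain ⟨a, ha, hxa⟩ := hP.exists_mem x
    exact ⟨a, ha, hδ a ha x hxa _ h₀, hxa⟩
  | succ n ih =>
    obtain ⟨a, ha, hxsa, hxa⟩ := ih
    obtain ⟨b, hb, hab⟩ := hf a ha
    refine ⟨b, hb, hδ b hb _ (hab ⟨xs n, hxsa, rfl⟩) _ (hxs n), ?_⟩
    rw [Function.iterate_succ_apply']
    exact hab ⟨_, hxa, rfl⟩

end Partition

theorem balloonEdge_right_unique {s m : ℕ} {a b c : Fin (s + m)} (hb : balloonEdge s m a b)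
    (hc : balloonEdge s m a c) : b = c := by
  unfold balloonEdge at hb hc
  omega

/-- The edge relation used in `AllComponentsBalloons`: the disjoint union of the balloons
`Fin (s i + t i)`. -/
def balloonUnionEdge {k : ℕ} (s t : Fin k → ℕ) (p q : Σ i, Fin (s i + t i)) : Prop :=
  ∃ h : p.1 = q.1, balloonEdge (s q.1) (t q.1) (Fin.cast (by rw [h]) p.2) q.2

theorem balloonUnionEdge_right_unique {k : ℕ} {s t : Fin k → ℕ} {p q r : Σ i, Fin (s i + t i)}
    (hq : balloonUnionEdge s t p q) (hr : balloonUnionEdge s t p r) : q = r := by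
  obtain ⟨i, u⟩ := p
  obtain ⟨j, v⟩ := q
  obtain ⟨l, w⟩ := r
  obtain ⟨hij, hq⟩ := hq
  obtain ⟨hil, hr⟩ := hr
  dsimp only at hij hil hq hr
  subst hij hil
  rw [balloonEdge_right_unique hq hr]

theorem AllComponentsBalloons.eq_of_gammaEdge {f : (ℕ → Bool) → (ℕ → Bool)}
    {P : Finset (Set (ℕ → Bool))} (hP : AllComponentsBalloons f P) {a b c : {a // a ∈ P}}
    (hab : gammaEdge f a b) (hac : gammaEdge f a c) : b = c := by
  obtain ⟨k, s, t, -, -, e, he⟩ := hP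
  exact e.injective (balloonUnionEdge_right_unique ((he a b).1 hab) ((he a c).1 hac))

theorem AllComponentsBalloons.exists_image_subset {f : (ℕ → Bool) → (ℕ → Bool)}
    {P : Finset (Set (ℕ → Bool))} (hP : IsPartition P) (hB : AllComponentsBalloons f P) :
    ∀ a ∈ P, ∃ b ∈ P, f '' a ⊆ b := by
  intro a ha
  obtain ⟨σ, hσ⟩ := (hP.1 a ha).2
  obtain ⟨b, hb, hσb⟩ := hP.exists_mem (f σ)
  refine ⟨b, hb, ?_⟩
  rintro _ ⟨τ, hτ, rfl⟩
  obtain ⟨c, hc, hτc⟩ := hP.exists_mem (f τ)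
  have hbc := hB.eq_of_gammaEdge (a := ⟨a, ha⟩) (b := ⟨b, hb⟩) (c := ⟨c, hc⟩)
    ⟨f σ, ⟨σ, hσ, rfl⟩, hσb⟩ ⟨f τ, ⟨τ, hτ, rfl⟩, hτc⟩
  rwa [show b = c from congrArg Subtype.val hbc]

theorem chain_continuous_everywhere_general (f : (ℕ → Bool) → (ℕ → Bool))
    (hyp : ∀ m : ℕ, 0 < m → ∃ P : Finset (Set (ℕ → Bool)), IsPartition P ∧
      mesh (↑P : Set (Set (ℕ → Bool))) < 1 / (m : ℝ) ∧ AllComponentsBalloons f P) :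
    ∀ x : ℕ → Bool, ∀ ε : ℝ, 0 < ε → ∃ δ : ℝ, 0 < δ ∧
      ∀ xs : ℕ → (ℕ → Bool), cantorDist (xs 0) x < δ →
        (∀ n : ℕ, cantorDist (xs (n + 1)) (f (xs n)) < δ) →
        ∀ n : ℕ, cantorDist (xs n) (f^[n] x) < ε := by
  intro x ε hε
  obtain ⟨m, hm⟩ := exists_nat_one_div_lt hε
  obtain ⟨P, hP, hmesh, hB⟩ := hyp (m + 1) m.succ_pos
  obtain ⟨δ, hδ, hLeb⟩ := hP.exists_pos_mem_of_cantorDist_lt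
  refine ⟨δ, hδ, fun xs h₀ hxs n => ?_⟩
  obtain ⟨a, ha, hxsa, hxa⟩ :=
    hP.exists_mem_iterate_of_pseudoOrbit (hB.exists_image_subset hP) hLeb h₀ hxs n
  calc cantorDist (xs n) (f^[n] x) ≤ cantorDiam a := cantorDist_le_cantorDiam hxsa hxa
    _ ≤ mesh (↑P : Set (Set (ℕ → Bool))) := cantorDiam_le_mesh ha
    _ < 1 / ((m + 1 : ℕ) : ℝ) := hmesh
    _ < ε := by exact_mod_cast hm

theorem chain_continuous_everywhere (f : (ℕ → Bool) → (ℕ → Bool)) (hf : Continuous f)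
    (hyp : ∀ m : ℕ, 0 < m → ∃ P : Finset (Set (ℕ → Bool)), IsPartition P ∧
      mesh (↑P : Set (Set (ℕ → Bool))) < 1 / (m : ℝ) ∧ AllComponentsBalloons f P) :
    ∀ x : ℕ → Bool, ∀ ε : ℝ, 0 < ε → ∃ δ : ℝ, 0 < δ ∧
      ∀ xs : ℕ → (ℕ → Bool), cantorDist (xs 0) x < δ →
        (∀ n : ℕ, cantorDist (xs (n + 1)) (f (xs n)) < δ) →
        ∀ n : ℕ, cantorDist (xs n) (f^[n] x) < ε :=
  chain_continuous_everywhere_general f hyp
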